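/- arXiv:2105.08271 — 7 statements merged into one kernel-verified Lean document; each statement's English description precedes it below -/
import Mathlib

section
/- Let v ∈ L^∞_loc(Ω), θ ≥ 1 and c > 0 be such that for every 0 < ρ < R with the closed ball B_R ⊂ Ω one has ‖v‖_{L^∞(B_ρ)}^{1/θ} ≤ (c/(R-ρ)^n) ∫_{B_R} |v| dx. Then for every λ ∈ ((θ-1)/θ, 1) there exists a constant c_λ such that for every 0 < ρ < R, ‖v‖_{L^∞(B_ρ)}^{(1-θ(1-λ))/θ} ≤ (c_λ/(R-ρ)^n) ∫_{B_R} |v|^λ dx. -/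
open MeasureTheory Filter
open scoped ENNReal

/-!
Write `M r = ‖v‖_{L^∞(B_r)}`, `I = ∫_{B_{R₀}} |v|^λ` and `α = θ(1-λ) < 1`. Interpolating
`∫_{B_R} |v| ≤ M(R)^{1-λ} I` in the hypothesis and raising it to the power `θ` gives
`M(ρ) ≤ c^θ (R-ρ)^{-nθ} I^θ M(R)^α` for `ρ₀ ≤ ρ < R < R₀`. Because `α < 1` the factor `M(R)^α`
can be absorbed: the weighted supremum `S = sup_{ρ₀ ≤ ρ < R₀} (R₀-ρ)^{nθ/(1-α)} M(ρ)` is finite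
by local boundedness, and comparing each `ρ` with the midpoint of `[ρ, R₀]` yields
`S ≤ 2^{nθ/(1-α)} c^θ I^θ S^α`, i.e. `S^{1-α} ≤ 2^{nθ/(1-α)} c^θ I^θ`.
-/

theorem ENNReal.rpow_one_sub_le_of_le_mul_rpow {S B : ℝ≥0∞} {α : ℝ} (hS : S ≠ ⊤) (hα : α < 1)
    (h : S ≤ B * S ^ α) : S ^ (1 - α) ≤ B := by
  rcases eq_or_ne S 0 with rfl | hS₀
  · simp [zero_rpow_of_pos (sub_pos.2 hα)]
  calc S ^ (1 - α) = S * S ^ (-α) := by rw [sub_eq_add_neg, rpow_add _ _ hS₀ hS, rpow_one]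
    _ ≤ B * S ^ α * S ^ (-α) := by gcongr
    _ = B := by rw [mul_assoc, ← rpow_add _ _ hS₀ hS, add_neg_cancel, rpow_zero, mul_one]

theorem ENNReal.ofReal_div_pow_mul_rpow {a d θ : ℝ} (ha : 0 ≤ a) (hd : 0 < d) (hθ : 0 ≤ θ)
    (n : ℕ) (x : ℝ≥0∞) :
    (ENNReal.ofReal (a / d ^ n) * x) ^ θ =
      ENNReal.ofReal (d ^ (-(n * θ))) * (ENNReal.ofReal (a ^ θ) * x ^ θ) := by
  rw [mul_rpow_of_nonneg _ _ hθ, ofReal_rpow_of_nonneg (by positivity) hθ,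
    Real.div_rpow ha (by positivity), ← Real.rpow_natCast, ← Real.rpow_mul hd.le,
    div_eq_inv_mul, ← Real.rpow_neg hd.le, ofReal_mul (by positivity), mul_assoc]

theorem Real.two_mul_rpow_mul_rpow_neg {e α β γ : ℝ} (he : 0 < e) (hγ : γ * (1 - α) = β) :
    (2 * e) ^ γ * e ^ (-β) = 2 ^ γ * (e ^ γ) ^ α := by
  rw [mul_rpow zero_le_two he.le, ← rpow_mul he.le, mul_assoc, ← rpow_add he]
  congr 3
  linear_combination hγ

section Absorption

open ENNReal

variable {M : ℝ → ℝ≥0∞} {ρ₀ R₀ α β : ℝ} {A : ℝ≥0∞}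

/-- The weight `(R₀ - ρ) ^ (β / (1 - α))` is chosen so that passing from `ρ` to the midpoint of
`[ρ, R₀]` costs exactly the factor `2 ^ (β / (1 - α))` against `(R - ρ) ^ (-β)`. -/
theorem Monotone.iSup_mul_rpow_one_sub_le (hM : Monotone M) (hfin : M R₀ ≠ ⊤) (hα₀ : 0 ≤ α)
    (hα₁ : α < 1) (hβ : 0 ≤ β)
    (hstep : ∀ ρ R, ρ₀ ≤ ρ → ρ < R → R < R₀ →
      M ρ ≤ ENNReal.ofReal ((R - ρ) ^ (-β)) * A * M R ^ α) :
    (⨆ ρ ∈ Set.Ico ρ₀ R₀, ENNReal.ofReal ((R₀ - ρ) ^ (β / (1 - α))) * M ρ) ^ (1 - α) ≤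
      ENNReal.ofReal (2 ^ (β / (1 - α))) * A := by
  set γ := β / (1 - α)
  set W : ℝ → ℝ≥0∞ := fun ρ => ENNReal.ofReal ((R₀ - ρ) ^ γ)
  set S := ⨆ ρ ∈ Set.Ico ρ₀ R₀, W ρ * M ρ
  have hWM_le : ∀ ρ ∈ Set.Ico ρ₀ R₀, W ρ * M ρ ≤ S := fun ρ hρ =>
    le_iSup₂ (f := fun ρ (_ : ρ ∈ Set.Ico ρ₀ R₀) => W ρ * M ρ) ρ hρ
  have hS_ne_top : S ≠ ⊤ := by
    refine ne_top_of_le_ne_top (b := W ρ₀ * M R₀) (mul_ne_top ofReal_ne_top hfin)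
      (iSup₂_le fun ρ hρ => ?_)
    exact mul_le_mul' (ofReal_le_ofReal (Real.rpow_le_rpow (by linarith [hρ.2])
      (by linarith [hρ.1]) (div_nonneg hβ (by linarith)))) (hM hρ.2.le)
  refine rpow_one_sub_le_of_le_mul_rpow hS_ne_top hα₁ (iSup₂_le fun ρ hρ => ?_)
  set e := (R₀ - ρ) / 2
  have he : 0 < e := by simp only [e]; linarith [hρ.2]
  have hR : ρ + e ∈ Set.Ico ρ₀ R₀ := ⟨by linarith [hρ.1], by simp only [e]; linarith [hρ.2]⟩
  have hweight : W ρ * ENNReal.ofReal (e ^ (-β)) = ENNReal.ofReal (2 ^ γ) * W (ρ + e) ^ α := by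
    simp only [W]
    rw [show R₀ - ρ = 2 * e by simp only [e]; ring, show R₀ - (ρ + e) = e by simp only [e]; ring,
      ← ofReal_mul (by positivity), ofReal_rpow_of_nonneg (by positivity) hα₀,
      ← ofReal_mul (by positivity),
      Real.two_mul_rpow_mul_rpow_neg he (div_mul_cancel₀ β (sub_pos.2 hα₁).ne')]
  calc W ρ * M ρ ≤ W ρ * (ENNReal.ofReal ((ρ + e - ρ) ^ (-β)) * A * M (ρ + e) ^ α) := by
        gcongr; exact hstep ρ (ρ + e) hρ.1 (by linarith) hR.2
    _ = ENNReal.ofReal (2 ^ γ) * A * (W (ρ + e) * M (ρ + e)) ^ α := by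
        rw [add_sub_cancel_left, mul_rpow_of_nonneg _ _ hα₀, ← mul_assoc, ← mul_assoc, hweight]
        ring
    _ ≤ ENNReal.ofReal (2 ^ γ) * A * S ^ α := by gcongr; exact hWM_le _ hR

theorem Monotone.rpow_one_sub_le_of_le_mul_rpow (hM : Monotone M) (hρR : ρ₀ < R₀)
    (hfin : M R₀ ≠ ⊤) (hα₀ : 0 ≤ α) (hα₁ : α < 1) (hβ : 0 ≤ β)
    (hstep : ∀ ρ R, ρ₀ ≤ ρ → ρ < R → R < R₀ →
      M ρ ≤ ENNReal.ofReal ((R - ρ) ^ (-β)) * A * M R ^ α) :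
    M ρ₀ ^ (1 - α) ≤ ENNReal.ofReal (2 ^ (β / (1 - α)) * (R₀ - ρ₀) ^ (-β)) * A := by
  have hd : 0 < R₀ - ρ₀ := sub_pos.2 hρR
  have hγ : β / (1 - α) * (1 - α) = β := div_mul_cancel₀ β (sub_pos.2 hα₁).ne'
  calc M ρ₀ ^ (1 - α) = ENNReal.ofReal ((R₀ - ρ₀) ^ (-β)) *
        (ENNReal.ofReal ((R₀ - ρ₀) ^ (β / (1 - α))) * M ρ₀) ^ (1 - α) := by
        rw [mul_rpow_of_nonneg _ _ (by linarith), ofReal_rpow_of_nonneg (by positivity)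
          (by linarith), ← Real.rpow_mul hd.le, hγ, ← mul_assoc, ← ofReal_mul (by positivity),
          ← Real.rpow_add hd, neg_add_cancel, Real.rpow_zero, ofReal_one, one_mul]
    _ ≤ ENNReal.ofReal ((R₀ - ρ₀) ^ (-β)) *
        (⨆ ρ ∈ Set.Ico ρ₀ R₀, ENNReal.ofReal ((R₀ - ρ) ^ (β / (1 - α))) * M ρ) ^ (1 - α) := by
        gcongr
        exact le_iSup₂ (f := fun ρ (_ : ρ ∈ Set.Ico ρ₀ R₀) =>
          ENNReal.ofReal ((R₀ - ρ) ^ (β / (1 - α))) * M ρ) ρ₀ ⟨le_rfl, hρR⟩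
    _ ≤ ENNReal.ofReal ((R₀ - ρ₀) ^ (-β)) * (ENNReal.ofReal (2 ^ (β / (1 - α))) * A) := by
        gcongr; exact hM.iSup_mul_rpow_one_sub_le hfin hα₀ hα₁ hβ hstep
    _ = ENNReal.ofReal (2 ^ (β / (1 - α)) * (R₀ - ρ₀) ^ (-β)) * A := by
        rw [← mul_assoc, ← ofReal_mul (by positivity), mul_comm ((R₀ - ρ₀) ^ (-β))]

end Absorption

section

variable {X ε : Type*} [MeasurableSpace X] [TopologicalSpace ε] [ContinuousENorm ε]
  {f : X → ε} {μ : Measure X}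

open ENNReal in
theorem lintegral_enorm_le_eLpNormEssSup_rpow_mul_lintegral_rpow {p : ℝ} (hp : p ≤ 1)
    (hf : eLpNormEssSup f μ ≠ ⊤) :
    ∫⁻ x, ‖f x‖ₑ ∂μ ≤ eLpNormEssSup f μ ^ (1 - p) * ∫⁻ x, ‖f x‖ₑ ^ p ∂μ := by
  rw [← lintegral_const_mul' _ _ (rpow_ne_top_of_nonneg (sub_nonneg.2 hp) hf)]
  refine lintegral_mono_ae ?_
  filter_upwards [enorm_ae_le_eLpNormEssSup f μ] with x hx
  rcases eq_or_ne ‖f x‖ₑ 0 with h0 | h0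
  · simp [h0]
  calc ‖f x‖ₑ = ‖f x‖ₑ ^ (1 - p) * ‖f x‖ₑ ^ p := by
        rw [← rpow_add _ _ h0 (ne_top_of_le_ne_top hf hx), sub_add_cancel, rpow_one]
    _ ≤ eLpNormEssSup f μ ^ (1 - p) * ‖f x‖ₑ ^ p := by gcongr

theorem eLpNormEssSup_restrict_mono {s t : Set X} (hst : s ⊆ t) :
    eLpNormEssSup f (μ.restrict s) ≤ eLpNormEssSup f (μ.restrict t) :=
  eLpNormEssSup_mono_measure f
    (Measure.absolutelyContinuous_of_le (Measure.restrict_mono_set μ hst))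

open ENNReal in
theorem eLpNormEssSup_restrict_le_of_rpow_inv_le_mul_lintegral {s t u : Set X} {θ p : ℝ}
    {K : ℝ≥0∞} (hθ : 0 < θ) (hp : p ≤ 1) (htu : t ⊆ u)
    (hft : eLpNormEssSup f (μ.restrict t) ≠ ⊤)
    (h : eLpNormEssSup f (μ.restrict s) ^ (1 / θ) ≤ K * ∫⁻ x in t, ‖f x‖ₑ ∂μ) :
    eLpNormEssSup f (μ.restrict s) ≤
      (K * ∫⁻ x in u, ‖f x‖ₑ ^ p ∂μ) ^ θ * eLpNormEssSup f (μ.restrict t) ^ (θ * (1 - p)) := by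
  have h' : eLpNormEssSup f (μ.restrict s) ^ (1 / θ) ≤
      K * eLpNormEssSup f (μ.restrict t) ^ (1 - p) * ∫⁻ x in u, ‖f x‖ₑ ^ p ∂μ := calc
    _ ≤ K * ∫⁻ x in t, ‖f x‖ₑ ∂μ := h
    _ ≤ K * (eLpNormEssSup f (μ.restrict t) ^ (1 - p) * ∫⁻ x in t, ‖f x‖ₑ ^ p ∂μ) := by
        gcongr; exact lintegral_enorm_le_eLpNormEssSup_rpow_mul_lintegral_rpow hp hft
    _ ≤ _ := by rw [← mul_assoc]; gcongr
  calc _ = (eLpNormEssSup f (μ.restrict s) ^ (1 / θ)) ^ θ := by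
        rw [← rpow_mul, one_div_mul_cancel hθ.ne', rpow_one]
    _ ≤ (K * eLpNormEssSup f (μ.restrict t) ^ (1 - p) * ∫⁻ x in u, ‖f x‖ₑ ^ p ∂μ) ^ θ := by
        gcongr
    _ = _ := by
        rw [mul_right_comm, mul_rpow_of_nonneg _ _ hθ.le, ← rpow_mul, mul_comm θ]

end

theorem interpolation_lemma_general {n : ℕ}
    (Ω : Set (EuclideanSpace ℝ (Fin n)))
    (x₀ : EuclideanSpace ℝ (Fin n)) (v : EuclideanSpace ℝ (Fin n) → ℝ)
    (hv : ∀ K : Set (EuclideanSpace ℝ (Fin n)), IsCompact K → K ⊆ Ω →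
      eLpNormEssSup v (volume.restrict K) < ⊤)
    (θ c : ℝ) (hθ : 1 ≤ θ) (hc : 0 < c)
    (h : ∀ ρ R : ℝ, 0 < ρ → ρ < R → Metric.closedBall x₀ R ⊆ Ω →
      (eLpNormEssSup v (volume.restrict (Metric.ball x₀ ρ))) ^ (1/θ)
        ≤ ENNReal.ofReal (c / (R - ρ)^n) * ∫⁻ x in Metric.ball x₀ R, ‖v x‖₊) :
    ∀ lam : ℝ, (θ - 1)/θ < lam → lam < 1 →
      ∃ clam : ℝ, 0 < clam ∧ ∀ ρ R : ℝ, 0 < ρ → ρ < R → Metric.closedBall x₀ R ⊆ Ω →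
        (eLpNormEssSup v (volume.restrict (Metric.ball x₀ ρ))) ^ ((1 - θ*(1-lam))/θ)
          ≤ ENNReal.ofReal (clam / (R - ρ)^n) *
              ∫⁻ x in Metric.ball x₀ R, (‖v x‖₊ : ENNReal) ^ lam := by
  intro lam hlam hlam₁
  have hθ₀ : 0 < θ := by linarith
  set α := θ * (1 - lam)
  have hα₀ : 0 ≤ α := mul_nonneg hθ₀.le (by linarith)
  have hα₁ : α < 1 := by have := (div_lt_iff₀ hθ₀).1 hlam; simp only [α]; linarith
  refine ⟨c * 2 ^ (n / (1 - α)), by positivity, fun ρ₀ R₀ hρ₀ hρR₀ hsub => ?_⟩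
  set M : ℝ → ℝ≥0∞ := fun r => eLpNormEssSup v (volume.restrict (Metric.ball x₀ r))
  set I := ∫⁻ x in Metric.ball x₀ R₀, (‖v x‖₊ : ℝ≥0∞) ^ lam
  have hM : Monotone M := fun r r' hr => eLpNormEssSup_restrict_mono (Metric.ball_subset_ball hr)
  have hfin : M R₀ ≠ ⊤ := ne_top_of_le_ne_top (hv _ (isCompact_closedBall x₀ R₀) hsub).ne
    (eLpNormEssSup_restrict_mono Metric.ball_subset_closedBall)
  have hstep : ∀ ρ R, ρ₀ ≤ ρ → ρ < R → R < R₀ →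
      M ρ ≤ ENNReal.ofReal ((R - ρ) ^ (-(n * θ))) * (ENNReal.ofReal (c ^ θ) * I ^ θ) * M R ^ α := by
    intro ρ R hρ hρR hRR₀
    have hBR : Metric.closedBall x₀ R ⊆ Ω :=
      (Metric.closedBall_subset_closedBall hRR₀.le).trans hsub
    have := eLpNormEssSup_restrict_le_of_rpow_inv_le_mul_lintegral (p := lam) hθ₀ hlam₁.le
      (Metric.ball_subset_ball hRR₀.le) (ne_top_of_le_ne_top hfin (hM hRR₀.le))
      (h ρ R (by linarith) hρR hBR)
    rwa [ENNReal.ofReal_div_pow_mul_rpow hc.le (sub_pos.2 hρR) hθ₀.le] at this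
  have hconst : (ENNReal.ofReal (c * 2 ^ (n / (1 - α)) / (R₀ - ρ₀) ^ n) * I) ^ θ =
      ENNReal.ofReal (2 ^ (n * θ / (1 - α)) * (R₀ - ρ₀) ^ (-(n * θ))) *
        (ENNReal.ofReal (c ^ θ) * I ^ θ) := by
    rw [ENNReal.ofReal_div_pow_mul_rpow (by positivity) (sub_pos.2 hρR₀) hθ₀.le,
      Real.mul_rpow hc.le (by positivity), ← Real.rpow_mul zero_le_two, div_mul_eq_mul_div,
      ENNReal.ofReal_mul (by positivity), ENNReal.ofReal_mul (by positivity)]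
    ring
  rw [← ENNReal.rpow_le_rpow_iff hθ₀, ← ENNReal.rpow_mul, div_mul_cancel₀ _ hθ₀.ne', hconst]
  exact hM.rpow_one_sub_le_of_le_mul_rpow hρR₀ hfin hα₀ hα₁ (by positivity) hstep

theorem interpolation_lemma {n : ℕ}
    (Ω : Set (EuclideanSpace ℝ (Fin n))) (hΩ : IsOpen Ω)
    (x₀ : EuclideanSpace ℝ (Fin n)) (v : EuclideanSpace ℝ (Fin n) → ℝ)
    (hv : ∀ K : Set (EuclideanSpace ℝ (Fin n)), IsCompact K → K ⊆ Ω →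
      eLpNormEssSup v (volume.restrict K) < ⊤)
    (θ c : ℝ) (hθ : 1 ≤ θ) (hc : 0 < c)
    (h : ∀ ρ R : ℝ, 0 < ρ → ρ < R → Metric.closedBall x₀ R ⊆ Ω →
      (eLpNormEssSup v (volume.restrict (Metric.ball x₀ ρ))) ^ (1/θ)
        ≤ ENNReal.ofReal (c / (R - ρ)^n) * ∫⁻ x in Metric.ball x₀ R, ‖v x‖₊) :
    ∀ lam : ℝ, (θ - 1)/θ < lam → lam < 1 →
      ∃ clam : ℝ, 0 < clam ∧ ∀ ρ R : ℝ, 0 < ρ → ρ < R → Metric.closedBall x₀ R ⊆ Ω →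
        (eLpNormEssSup v (volume.restrict (Metric.ball x₀ ρ))) ^ ((1 - θ*(1-lam))/θ)
          ≤ ENNReal.ofReal (clam / (R - ρ)^n) *
              ∫⁻ x in Metric.ball x₀ R, (‖v x‖₊ : ENNReal) ^ lam :=
  interpolation_lemma_general Ω x₀ v hv θ c hθ hc h
end

section
/- Let f : ℝ^n → ℝ be positive and of class C² on {ξ : |ξ| ≥ 1}, satisfying Σ_{i,j} f_{ξ_i ξ_j}(ξ) λ_i λ_j ≤ M|ξ|^{q-2}|λ|² for all λ, ξ with |ξ| ≥ 1, where M > 0 and q > 1. Then there exists t̄ ≥ 1 such that f(ξ) ≤ (2M/(q-1)) |ξ|^q for all |ξ| ≥ t̄. -/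
/-!
Along a ray `s ↦ f (s • ω)` with `‖ω‖ = 1` the second derivative is at most `M * s ^ (q - 2)`,
which is the second derivative of `M / (q - 1) / q * s ^ q`. Integrating this comparison twice
from radius `2` (inside the open region where `f` is `C²`) bounds `f (t • ω)` by
`M / (q - 1) / q * t ^ q` plus an affine function of `t` whose coefficients are bounded uniformly
in `ω` by compactness of the sphere of radius `2`. For large `t` the affine part is at most
`M / (q - 1) * t ^ q`, and `1 / q < 1` gives the constant `2 * M / (q - 1)`.
-/

open Set Filter Metric

lemma sub_le_sub_of_hasDerivAt_le {g g' F F' : ℝ → ℝ} {a b : ℝ} (hab : a ≤ b)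
    (hg : ∀ s ∈ Icc a b, HasDerivAt g (g' s) s) (hF : ∀ s ∈ Icc a b, HasDerivAt F (F' s) s)
    (hle : ∀ s ∈ Icc a b, g' s ≤ F' s) : g b - g a ≤ F b - F a := by
  have hmono : MonotoneOn (fun s => F s - g s) (Icc a b) :=
    monotoneOn_of_hasDerivWithinAt_nonneg (convex_Icc a b)
      (fun s hs => ((hF s hs).sub (hg s hs)).continuousAt.continuousWithinAt)
      (fun s hs => ((hF s (interior_subset hs)).sub (hg s (interior_subset hs))).hasDerivWithinAt)
      (fun s hs => sub_nonneg.2 (hle s (interior_subset hs)))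
  have := hmono (left_mem_Icc.2 hab) (right_mem_Icc.2 hab) hab
  linarith

lemma taylor_sub_le_of_hasDerivAt_le {g g' g'' F F' F'' : ℝ → ℝ} {a b : ℝ} (hab : a ≤ b)
    (hg : ∀ s ∈ Icc a b, HasDerivAt g (g' s) s) (hg' : ∀ s ∈ Icc a b, HasDerivAt g' (g'' s) s)
    (hF : ∀ s ∈ Icc a b, HasDerivAt F (F' s) s) (hF' : ∀ s ∈ Icc a b, HasDerivAt F' (F'' s) s)
    (hle : ∀ s ∈ Icc a b, g'' s ≤ F'' s) :
    g b - g a - g' a * (b - a) ≤ F b - F a - F' a * (b - a) := by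
  have hderiv : ∀ s ∈ Icc a b, g' s ≤ F' s + (g' a - F' a) := fun s hs => by
    have hsub : Icc a s ⊆ Icc a b := Icc_subset_Icc_right hs.2
    have := sub_le_sub_of_hasDerivAt_le hs.1 (fun r hr => hg' r (hsub hr))
      (fun r hr => hF' r (hsub hr)) (fun r hr => hle r (hsub hr))
    linarith
  have hshift : ∀ s ∈ Icc a b,
      HasDerivAt (fun r => F r + (g' a - F' a) * r) (F' s + (g' a - F' a)) s := fun s hs =>
    (hF s hs).add (((hasDerivAt_id s).const_mul _).congr_deriv (mul_one _))
  have := sub_le_sub_of_hasDerivAt_le hab hg hshift hderiv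
  linarith

lemma hasDerivAt_div_mul_rpow (c : ℝ) {p s : ℝ} (hp : p ≠ 0) (hs : s ≠ 0) :
    HasDerivAt (fun r => c / p * r ^ p) (c * s ^ (p - 1)) s :=
  ((Real.hasDerivAt_rpow_const (Or.inl hs)).const_mul (c / p)).congr_deriv (by field_simp)

lemma le_add_of_second_deriv_le_rpow {g g' g'' : ℝ → ℝ} {M q a b : ℝ} (hM : 0 ≤ M) (hq : 1 < q)
    (ha : 0 < a) (hab : a ≤ b)
    (hg : ∀ s ∈ Icc a b, HasDerivAt g (g' s) s) (hg' : ∀ s ∈ Icc a b, HasDerivAt g' (g'' s) s)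
    (hle : ∀ s ∈ Icc a b, g'' s ≤ M * s ^ (q - 2)) :
    g b ≤ g a + g' a * (b - a) + M / (q - 1) / q * b ^ q := by
  have hq1 : q - 1 ≠ 0 := sub_ne_zero.2 hq.ne'
  have hne : ∀ s ∈ Icc a b, s ≠ 0 := fun s hs => (ha.trans_le hs.1).ne'
  have hcmp := taylor_sub_le_of_hasDerivAt_le (F'' := fun s => M * s ^ (q - 2)) hab hg hg'
    (fun s hs => hasDerivAt_div_mul_rpow (M / (q - 1)) (by linarith) (hne s hs))
    (fun s hs => (hasDerivAt_div_mul_rpow M hq1 (hne s hs)).congr_deriv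
      (by rw [show q - 1 - 1 = q - 2 by ring])) hle
  have hC : 0 ≤ M / (q - 1) := div_nonneg hM (by linarith)
  have hFa : 0 ≤ M / (q - 1) / q * a ^ q :=
    mul_nonneg (div_nonneg hC (by linarith)) (Real.rpow_nonneg ha.le q)
  have hF'a : 0 ≤ M / (q - 1) * a ^ (q - 1) * (b - a) :=
    mul_nonneg (mul_nonneg hC (Real.rpow_nonneg ha.le _)) (sub_nonneg.2 hab)
  linarith

section Ray

variable {E : Type*} [NormedAddCommGroup E] [NormedSpace ℝ E]

lemma DifferentiableAt.hasDerivAt_comp_smul {F : Type*} [NormedAddCommGroup F]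
    [NormedSpace ℝ F] {f : E → F} {v : E} {s : ℝ} (hf : DifferentiableAt ℝ f (s • v)) :
    HasDerivAt (fun r : ℝ => f (r • v)) (fderiv ℝ f (s • v) v) s :=
  hf.hasFDerivAt.comp_hasDerivAt s (by simpa using (hasDerivAt_id s).smul_const v)

lemma le_along_ray_of_hessian_le {f : E → ℝ} {U : Set E} (hU : IsOpen U)
    (hf : ContDiffOn ℝ 2 f U) {v : E} {M q a b : ℝ} (hM : 0 ≤ M) (hq : 1 < q) (ha : 0 < a)
    (hab : a ≤ b) (hray : ∀ s ∈ Icc a b, s • v ∈ U)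
    (hess : ∀ s ∈ Icc a b, fderiv ℝ (fun x => fderiv ℝ f x v) (s • v) v ≤ M * s ^ (q - 2)) :
    f (b • v) ≤ f (a • v) + fderiv ℝ f (a • v) v * (b - a) + M / (q - 1) / q * b ^ q := by
  have hdf : ∀ s ∈ Icc a b, DifferentiableAt ℝ f (s • v) := fun s hs =>
    (hf.differentiableOn (by norm_num)).differentiableAt (hU.mem_nhds (hray s hs))
  have hd2f : ∀ s ∈ Icc a b, DifferentiableAt ℝ (fun x => fderiv ℝ f x v) (s • v) :=
    fun s hs => ((((hf.fderiv_of_isOpen (m := 1) hU (by norm_num)).differentiableOn (by norm_num))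
      |>.differentiableAt (hU.mem_nhds (hray s hs))).clm_apply (differentiableAt_const v))
  exact le_add_of_second_deriv_le_rpow hM hq ha hab (fun s hs => (hdf s hs).hasDerivAt_comp_smul)
    (fun s hs => (hd2f s hs).hasDerivAt_comp_smul) hess

lemma le_along_unit_ray_of_hessian_le {f : E → ℝ} {M q : ℝ} (hM : 0 ≤ M) (hq : 1 < q)
    (hreg : ContDiffOn ℝ 2 f {ξ : E | 1 ≤ ‖ξ‖})
    (hess : ∀ ξ lam : E, 1 ≤ ‖ξ‖ →
      fderiv ℝ (fun x => fderiv ℝ f x lam) ξ lam ≤ M * ‖ξ‖ ^ (q - 2) * ‖lam‖ ^ 2)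
    {ω : E} (hω : ‖ω‖ = 1) {a b : ℝ} (ha : 1 < a) (hab : a ≤ b) :
    f (b • ω) ≤ f (a • ω) + fderiv ℝ f (a • ω) ω * (b - a) + M / (q - 1) / q * b ^ q := by
  have hnorm : ∀ s ∈ Icc a b, ‖s • ω‖ = s := fun s hs => by
    rw [norm_smul_of_nonneg (by linarith [hs.1]), hω, mul_one]
  refine le_along_ray_of_hessian_le (U := {x | 1 < ‖x‖}) (isOpen_lt continuous_const
    continuous_norm) (hreg.mono fun x (hx : 1 < ‖x‖) => hx.le) hM hq (by linarith) hab
    (fun s hs => show 1 < ‖s • ω‖ by rw [hnorm s hs]; linarith [hs.1]) (fun s hs => ?_)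
  have h := hess (s • ω) ω (by rw [hnorm s hs]; linarith [hs.1])
  rwa [hnorm s hs, hω, one_pow, mul_one] at h

lemma exists_bound_on_sphere_of_contDiffOn [ProperSpace E] {f : E → ℝ} {U : Set E}
    (hU : IsOpen U) (hf : ContDiffOn ℝ 1 f U) {r : ℝ} (hr : 0 ≤ r) (hsph : sphere 0 r ⊆ U) :
    ∃ A B : ℝ, ∀ ω : E, ‖ω‖ = 1 → f (r • ω) ≤ A ∧ fderiv ℝ f (r • ω) ω ≤ B := by
  obtain ⟨A, hA⟩ := (isCompact_sphere 0 r).exists_bound_of_continuousOn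
    (hf.continuousOn.mono hsph)
  obtain ⟨B, hB⟩ := (isCompact_sphere 0 r).exists_bound_of_continuousOn
    ((hf.continuousOn_fderiv_of_isOpen hU le_rfl).mono hsph)
  refine ⟨A, B, fun ω hω => ?_⟩
  have hrω : r • ω ∈ sphere 0 r := by
    rw [mem_sphere_zero_iff_norm, norm_smul_of_nonneg hr, hω, mul_one]
  refine ⟨(le_abs_self _).trans (hA _ hrω), ?_⟩
  calc _ ≤ ‖fderiv ℝ f (r • ω)‖ * ‖ω‖ :=
        (Real.le_norm_self _).trans (ContinuousLinearMap.le_opNorm _ _)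
    _ ≤ B := by rw [hω, mul_one]; exact hB _ hrω

end Ray

lemma eventually_add_mul_le_mul_rpow (A B : ℝ) {C q : ℝ} (hC : 0 < C) (hq : 1 < q) :
    ∀ᶠ t in atTop, A + B * t ≤ C * t ^ q := by
  filter_upwards [eventually_ge_atTop 1,
    (tendsto_rpow_atTop (sub_pos.2 hq)).eventually_ge_atTop ((|A| + |B|) / C)] with t ht1 htq
  have ht : 0 < t := by linarith
  have hpow : t ^ (q - 1) * t = t ^ q := by
    rw [Real.rpow_sub_one ht.ne', div_mul_cancel₀ _ ht.ne']
  calc A + B * t ≤ (|A| + |B|) * t := by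
        nlinarith [le_abs_self A, mul_le_mul_of_nonneg_left ht1 (abs_nonneg A),
          mul_le_mul_of_nonneg_right (le_abs_self B) ht.le]
    _ ≤ C * t ^ (q - 1) * t := by
        gcongr
        rwa [div_le_iff₀ hC, mul_comm] at htq
    _ = C * t ^ q := by rw [mul_assoc, hpow]

theorem upper_growth_from_ellipticity_general {n : ℕ}
    (f : EuclideanSpace ℝ (Fin n) → ℝ) (M q : ℝ) (hM : 0 < M) (hq : 1 < q)
    (hreg : ContDiffOn ℝ 2 f {ξ : EuclideanSpace ℝ (Fin n) | 1 ≤ ‖ξ‖})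
    (hess : ∀ ξ lam : EuclideanSpace ℝ (Fin n), 1 ≤ ‖ξ‖ →
      fderiv ℝ (fun x => fderiv ℝ f x lam) ξ lam ≤ M * ‖ξ‖ ^ (q - 2) * ‖lam‖ ^ 2) :
    ∃ tbar : ℝ, 1 ≤ tbar ∧ ∀ ξ : EuclideanSpace ℝ (Fin n), tbar ≤ ‖ξ‖ →
      f ξ ≤ 2 * M / (q - 1) * ‖ξ‖ ^ q := by
  have hfU : ContDiffOn ℝ 1 f {x | 1 < ‖x‖} :=
    (hreg.mono fun x (hx : 1 < ‖x‖) => hx.le).of_le (by norm_num)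
  obtain ⟨A, B, hAB⟩ := exists_bound_on_sphere_of_contDiffOn
    (isOpen_lt continuous_const continuous_norm) hfU zero_le_two
    fun x hx => show 1 < ‖x‖ by rw [mem_sphere_zero_iff_norm.1 hx]; norm_num
  have hC : 0 < M / (q - 1) := div_pos hM (sub_pos.2 hq)
  obtain ⟨T, hT⟩ := eventually_atTop.1 (eventually_add_mul_le_mul_rpow (A - 2 * B) B hC hq)
  refine ⟨max T 2, le_max_of_le_right one_le_two, fun ξ hξ => ?_⟩
  have ht2 : 2 ≤ ‖ξ‖ := le_of_max_le_right hξ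
  have hξ0 : ‖ξ‖ ≠ 0 := by linarith
  have hω : ‖‖ξ‖⁻¹ • ξ‖ = 1 := by rw [norm_smul, norm_inv, norm_norm, inv_mul_cancel₀ hξ0]
  obtain ⟨hf2, hdf2⟩ := hAB _ hω
  have hlin := mul_le_mul_of_nonneg_right hdf2 (sub_nonneg.2 ht2)
  have hray := le_along_unit_ray_of_hessian_le hM.le hq hreg hess hω one_lt_two ht2
  rw [smul_inv_smul₀ hξ0] at hray
  have hlarge := hT _ (le_of_max_le_left hξ)
  have hq_div : M / (q - 1) / q * ‖ξ‖ ^ q ≤ M / (q - 1) * ‖ξ‖ ^ q :=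
    mul_le_mul_of_nonneg_right (div_le_self hC.le hq.le) (by positivity)
  rw [mul_div_assoc]
  linarith

theorem upper_growth_from_ellipticity {n : ℕ}
    (f : EuclideanSpace ℝ (Fin n) → ℝ) (M q : ℝ) (hM : 0 < M) (hq : 1 < q)
    (hpos : ∀ ξ, 0 < f ξ)
    (hreg : ContDiffOn ℝ 2 f {ξ : EuclideanSpace ℝ (Fin n) | 1 ≤ ‖ξ‖})
    (hess : ∀ ξ lam : EuclideanSpace ℝ (Fin n), 1 ≤ ‖ξ‖ →
      fderiv ℝ (fun x => fderiv ℝ f x lam) ξ lam ≤ M * ‖ξ‖ ^ (q - 2) * ‖lam‖ ^ 2) :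
    ∃ tbar : ℝ, 1 ≤ tbar ∧ ∀ ξ : EuclideanSpace ℝ (Fin n), tbar ≤ ‖ξ‖ →
      f ξ ≤ 2 * M / (q - 1) * ‖ξ‖ ^ q :=
  upper_growth_from_ellipticity_general f M q hM hq hreg hess
end

section
/- Let f : ℝ^n → ℝ be positive and of class C² on {ξ : |ξ| ≥ 1}, satisfying m|ξ|^{-1}|λ|² ≤ Σ_{i,j} f_{ξ_i ξ_j}(ξ) λ_i λ_j for all λ, ξ with |ξ| ≥ 1, where m > 0 (the case p = 1). Then there exists t̄ ≥ 1 such that f(ξ) ≥ (m/2) |ξ| log|ξ| for all |ξ| ≥ t̄. -/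
open Real Set

/-!
Along a ray `t ↦ t • ω` with `‖ω‖ = 1` the ellipticity bound says `g'' ≥ m / t` for
`g t = f (t • ω)`, and `(t log t)'' = 1 / t`, so `h = g - m t log t` is convex on `(1, ∞)`.
Positivity of `f` bounds `h 3` below and compactness of the sphere of radius 2 bounds `h 2`
above uniformly in `ω`; convexity then gives the linear lower bound `h t ≥ -K t` for `t ≥ 4`,
which the `(m / 2) t log t` slack absorbs once `log t ≥ 2K / m`.
-/

lemma convexOn_Ioi_sub_mul_mul_log {a m : ℝ} (ha : 0 ≤ a) {g g' g'' : ℝ → ℝ}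
    (hg : ∀ t ∈ Ioi a, HasDerivAt g (g' t) t)
    (hg' : ∀ t ∈ Ioi a, HasDerivAt g' (g'' t) t)
    (hg'' : ∀ t ∈ Ioi a, m * t⁻¹ ≤ g'' t) :
    ConvexOn ℝ (Ioi a) (fun t => g t - m * (t * log t)) := by
  have hne : ∀ t ∈ Ioi a, t ≠ 0 := fun t ht => (ha.trans_lt ht).ne'
  have hderiv : ∀ t ∈ Ioi a,
      HasDerivAt (fun t => g t - m * (t * log t)) (g' t - m * (log t + 1)) t :=
    fun t ht => (hg t ht).sub ((hasDerivAt_mul_log (hne t ht)).const_mul m)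
  refine convexOn_of_hasDerivWithinAt2_nonneg (convex_Ioi a)
    (f' := fun t => g' t - m * (log t + 1)) (f'' := fun t => g'' t - m * t⁻¹)
    (fun t ht => (hderiv t ht).continuousAt.continuousWithinAt) ?_ ?_ ?_ <;>
    simp only [interior_Ioi]
  · exact fun t ht => (hderiv t ht).hasDerivWithinAt
  · exact fun t ht =>
      ((hg' t ht).sub (((hasDerivAt_log (hne t ht)).add_const 1).const_mul m)).hasDerivWithinAt
  · exact fun t ht => sub_nonneg.2 (hg'' t ht)

lemma exists_mul_log_le_of_convexOn_sub_mul_mul_log {m : ℝ} (hm : 0 < m) (C : ℝ) :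
    ∃ T, 1 ≤ T ∧ ∀ g : ℝ → ℝ, 0 ≤ g 3 → g 2 ≤ C →
      ConvexOn ℝ (Ioi 1) (fun t => g t - m * (t * log t)) →
      ∀ t, T ≤ t → m / 2 * t * log t ≤ g t := by
  set K := 3 * m * log 3 + max C 0
  refine ⟨max 4 (exp (2 * K / m)), le_max_of_le_left (by norm_num),
    fun g hg3 hg2 hconv t ht => ?_⟩
  have ht4 : 4 ≤ t := le_of_max_le_left ht
  have hlog : 2 * K / m ≤ log t :=
    (le_log_iff_exp_le (by linarith)).2 (le_of_max_le_right ht)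
  have hslope := hconv.slope_mono_adjacent (x := 2) (y := 3) (z := t)
    (by norm_num) (by simp only [mem_Ioi]; linarith) (by norm_num) (by linarith)
  have hlog2 : 0 ≤ log 2 := log_nonneg (by norm_num)
  have hlog3 : 0 ≤ log 3 := log_nonneg (by norm_num)
  have hlinear : -(K * t) ≤ g t - m * (t * log t) := by
    rw [div_le_div_iff₀ (by norm_num) (by linarith)] at hslope
    nlinarith [le_max_left C 0, le_max_right C 0, mul_nonneg hm.le hlog2]
  have hslack : K * t ≤ m / 2 * t * log t := by
    rw [div_le_iff₀ hm] at hlog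
    nlinarith
  linarith

section Ray

variable {E F : Type*} [NormedAddCommGroup E] [NormedSpace ℝ E]
  [NormedAddCommGroup F] [NormedSpace ℝ F]

lemma DifferentiableAt.hasDerivAt_comp_smul_const {φ : E → F} {v : E} {t : ℝ}
    (h : DifferentiableAt ℝ φ (t • v)) :
    HasDerivAt (fun s : ℝ => φ (s • v)) (fderiv ℝ φ (t • v) v) t :=
  h.hasFDerivAt.comp_hasDerivAt t (by simpa using (hasDerivAt_id t).smul_const v)

lemma ContDiffAt.differentiableAt_fderiv_apply {f : E → F} {x : E} (h : ContDiffAt ℝ 2 f x)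
    (v : E) : DifferentiableAt ℝ (fun y => fderiv ℝ f y v) x :=
  ((h.fderiv_right (m := 1) (by norm_num)).differentiableAt (by norm_num)).clm_apply
    (differentiableAt_const v)

lemma convexOn_ray_sub_mul_mul_log {f : E → ℝ} {m : ℝ} {ω : E} (hω : ‖ω‖ = 1)
    (hreg : ContDiffOn ℝ 2 f {ξ | 1 ≤ ‖ξ‖})
    (hess : ∀ ξ, 1 ≤ ‖ξ‖ → m * ‖ξ‖⁻¹ ≤ fderiv ℝ (fun x => fderiv ℝ f x ω) ξ ω) :
    ConvexOn ℝ (Ioi 1) (fun t => f (t • ω) - m * (t * log t)) := by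
  have hnorm : ∀ t ∈ Ioi (1 : ℝ), ‖t • ω‖ = t := fun t ht => by
    rw [norm_smul_of_nonneg (zero_le_one.trans (le_of_lt ht)), hω, mul_one]
  have hC2 : ∀ t ∈ Ioi (1 : ℝ), ContDiffAt ℝ 2 f (t • ω) := fun t ht =>
    hreg.contDiffAt <| Filter.mem_of_superset
      ((isOpen_lt continuous_const continuous_norm).mem_nhds (by simpa [hnorm t ht] using ht))
      fun x (h : 1 < ‖x‖) => (le_of_lt h : 1 ≤ ‖x‖)
  refine convexOn_Ioi_sub_mul_mul_log zero_le_one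
    (fun t ht => ((hC2 t ht).differentiableAt (by norm_num)).hasDerivAt_comp_smul_const)
    (fun t ht => ((hC2 t ht).differentiableAt_fderiv_apply ω).hasDerivAt_comp_smul_const)
    fun t ht => ?_
  simpa [hnorm t ht] using hess (t • ω) (by rw [hnorm t ht]; exact le_of_lt ht)

end Ray

theorem lower_growth_from_ellipticity_p_one {n : ℕ}
    (f : EuclideanSpace ℝ (Fin n) → ℝ) (m : ℝ) (hm : 0 < m)
    (hpos : ∀ ξ, 0 < f ξ)
    (hreg : ContDiffOn ℝ 2 f {ξ : EuclideanSpace ℝ (Fin n) | 1 ≤ ‖ξ‖})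
    (hess : ∀ ξ lam : EuclideanSpace ℝ (Fin n), 1 ≤ ‖ξ‖ →
      m * ‖ξ‖⁻¹ * ‖lam‖ ^ 2 ≤ fderiv ℝ (fun x => fderiv ℝ f x lam) ξ lam) :
    ∃ tbar : ℝ, 1 ≤ tbar ∧ ∀ ξ : EuclideanSpace ℝ (Fin n), tbar ≤ ‖ξ‖ →
      m / 2 * ‖ξ‖ * Real.log ‖ξ‖ ≤ f ξ := by
  obtain ⟨C, hC⟩ := (isCompact_sphere (0 : EuclideanSpace ℝ (Fin n)) 2).bddAbove_image
    (f := f) (hreg.continuousOn.mono fun ξ hξ => by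
      simp only [mem_sphere_zero_iff_norm] at hξ
      simp only [mem_ofPred_eq, hξ]; norm_num)
  obtain ⟨T, hT1, hT⟩ := exists_mul_log_le_of_convexOn_sub_mul_mul_log hm C
  refine ⟨T, hT1, fun ξ hξ => ?_⟩
  have hξ0 : ξ ≠ 0 := norm_pos_iff.1 (by linarith)
  set ω := ‖ξ‖⁻¹ • ξ with hω_def
  have hω : ‖ω‖ = 1 := norm_smul_inv_norm hξ0
  have hray := hT (fun t => f (t • ω)) (hpos _).le
    (hC (mem_image_of_mem f (by simp [norm_smul, hω])))
    (convexOn_ray_sub_mul_mul_log hω hreg fun ξ' h => by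
      simpa only [hω, one_pow, mul_one] using hess ξ' ω h) ‖ξ‖ hξ
  simpa [hω_def, smul_inv_smul₀ (norm_ne_zero_iff.2 hξ0)] using hray
end

section
/- Let f(ξ) = Σ_{i=1}^n (1 + ξ_i²)^{p_i/2} with 1 < p_i ≤ 2 for all i, and let p = min_i p_i. Then for all λ, ξ ∈ ℝ^n, Σ_{i,j=1}^n f_{ξ_i ξ_j}(ξ) λ_i λ_j ≥ p(p-1)(1 + |ξ|²)^{(p-2)/2} |λ|². -/
/-! `f` is separable, so its Hessian is diagonal and the quadratic form is
`∑ g_{Pᵢ}''(ξᵢ) λᵢ²` with `g_a(t) = (1 + t²)^{a/2}` and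
`g_a''(t) = a (1 + (a - 1) t²) (1 + t²)^{a/2 - 2}`. For `a ≤ 2` this is at least
`a (a - 1) (1 + t²)^{(a-2)/2}`, and since the exponent `(a - 2)/2` is nonpositive while
`1 + t² ≤ 1 + |ξ|²`, and `a ↦ a (a - 1)` and `a ↦ (1 + |ξ|²)^{(a-2)/2}` increase, each
coefficient dominates `p (p - 1) (1 + |ξ|²)^{(p-2)/2}`. -/

open Finset

section Separable

variable {ι : Type*} [Fintype ι]

theorem hasFDerivAt_sum_comp_apply {g g' : ι → ℝ → ℝ}
    (hg : ∀ i t, HasDerivAt (g i) (g' i t) t) (x : EuclideanSpace ℝ ι) :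
    HasFDerivAt (fun ξ : EuclideanSpace ℝ ι => ∑ i, g i (ξ i))
      (∑ i, g' i (x i) • (EuclideanSpace.proj i : EuclideanSpace ℝ ι →L[ℝ] ℝ)) x :=
  HasFDerivAt.fun_sum fun i _ =>
    (hg i (x i)).comp_hasFDerivAt x
      (EuclideanSpace.proj i : EuclideanSpace ℝ ι →L[ℝ] ℝ).hasFDerivAt

theorem fderiv_sum_comp_apply_apply {g g' : ι → ℝ → ℝ}
    (hg : ∀ i t, HasDerivAt (g i) (g' i t) t) (x v : EuclideanSpace ℝ ι) :
    fderiv ℝ (fun ξ : EuclideanSpace ℝ ι => ∑ i, g i (ξ i)) x v = ∑ i, g' i (x i) * v i := by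
  simp [(hasFDerivAt_sum_comp_apply hg x).fderiv]

theorem fderiv_fderiv_sum_comp_apply_apply {g g' g'' : ι → ℝ → ℝ}
    (hg : ∀ i t, HasDerivAt (g i) (g' i t) t) (hg' : ∀ i t, HasDerivAt (g' i) (g'' i t) t)
    (x v : EuclideanSpace ℝ ι) :
    fderiv ℝ (fun y => fderiv ℝ (fun ξ : EuclideanSpace ℝ ι => ∑ i, g i (ξ i)) y v) x v
      = ∑ i, g'' i (x i) * v i ^ 2 := by
  simp_rw [fderiv_sum_comp_apply_apply hg]
  rw [fderiv_sum_comp_apply_apply (g' := fun i t => g'' i t * v i)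
    fun i t => (hg' i t).mul_const (v i)]
  simp_rw [sq, mul_assoc]

end Separable

theorem hasDerivAt_one_add_sq_rpow_half (a t : ℝ) :
    HasDerivAt (fun t : ℝ => (1 + t ^ 2) ^ (a / 2)) (a * t * (1 + t ^ 2) ^ (a / 2 - 1)) t := by
  have h := (((hasDerivAt_pow 2 t).const_add 1).rpow_const (p := a / 2)
    (Or.inl (by positivity)))
  refine h.congr_deriv ?_
  push_cast
  ring

theorem hasDerivAt_mul_mul_one_add_sq_rpow (a t : ℝ) :
    HasDerivAt (fun t : ℝ => a * t * (1 + t ^ 2) ^ (a / 2 - 1))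
      (a * (1 + (a - 1) * t ^ 2) * (1 + t ^ 2) ^ (a / 2 - 2)) t := by
  have hpos : (0 : ℝ) < 1 + t ^ 2 := by positivity
  have h := ((hasDerivAt_id' t).const_mul a).fun_mul
    (((hasDerivAt_pow 2 t).const_add 1).rpow_const (p := a / 2 - 1) (Or.inl hpos.ne'))
  refine h.congr_deriv ?_
  rw [show a / 2 - 1 = a / 2 - 2 + 1 by ring, Real.rpow_add_one hpos.ne',
    show a / 2 - 2 + 1 - 1 = a / 2 - 2 by ring]
  push_cast
  ring

theorem mul_sub_one_mul_one_add_sq_rpow_le {a : ℝ} (t : ℝ) (ha₀ : 0 ≤ a) (ha₂ : a ≤ 2) :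
    a * (a - 1) * (1 + t ^ 2) ^ ((a - 2) / 2)
      ≤ a * (1 + (a - 1) * t ^ 2) * (1 + t ^ 2) ^ (a / 2 - 2) := by
  have hpos : (0 : ℝ) < 1 + t ^ 2 := by positivity
  have hbase : a * (a - 1) * (1 + t ^ 2) ≤ a * (1 + (a - 1) * t ^ 2) := by nlinarith
  calc a * (a - 1) * (1 + t ^ 2) ^ ((a - 2) / 2)
      = a * (a - 1) * (1 + t ^ 2) * (1 + t ^ 2) ^ (a / 2 - 2) := by
        rw [show (a - 2) / 2 = a / 2 - 2 + 1 by ring, Real.rpow_add_one hpos.ne']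
        ring
    _ ≤ a * (1 + (a - 1) * t ^ 2) * (1 + t ^ 2) ^ (a / 2 - 2) := by gcongr

theorem mul_sub_one_mul_one_add_rpow_le_of_le {p a S t : ℝ} (hp : 1 ≤ p) (hpa : p ≤ a)
    (ha : a ≤ 2) (ht : t ^ 2 ≤ S) :
    p * (p - 1) * (1 + S) ^ ((p - 2) / 2) ≤ a * (a - 1) * (1 + t ^ 2) ^ ((a - 2) / 2) := by
  have hS : 1 ≤ 1 + S := by nlinarith
  have hexp : (1 + S) ^ ((p - 2) / 2) ≤ (1 + t ^ 2) ^ ((a - 2) / 2) :=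
    calc (1 + S) ^ ((p - 2) / 2) ≤ (1 + S) ^ ((a - 2) / 2) :=
          Real.rpow_le_rpow_of_exponent_le hS (by linarith)
      _ ≤ (1 + t ^ 2) ^ ((a - 2) / 2) :=
          Real.rpow_le_rpow_of_nonpos (by positivity) (by linarith) (by linarith)
  have hcoef : p * (p - 1) ≤ a * (a - 1) := by nlinarith
  gcongr
  nlinarith

theorem anisotropic_hessian_lower_bound {n : ℕ}
    (P : Fin n → ℝ) (hP : ∀ i, 1 < P i ∧ P i ≤ 2)
    (p : ℝ) (hp : IsLeast (Set.range P) p)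
    (f : EuclideanSpace ℝ (Fin n) → ℝ)
    (hf : f = fun ξ => ∑ i, (1 + (ξ i) ^ 2) ^ (P i / 2)) :
    ∀ ξ lam : EuclideanSpace ℝ (Fin n),
      p * (p - 1) * (1 + ‖ξ‖ ^ 2) ^ ((p - 2) / 2) * ‖lam‖ ^ 2
        ≤ fderiv ℝ (fun x => fderiv ℝ f x lam) ξ lam := by
  obtain ⟨⟨i₀, rfl⟩, hmin⟩ := hp
  intro ξ lam
  subst hf
  rw [fderiv_fderiv_sum_comp_apply_apply (fun i => hasDerivAt_one_add_sq_rpow_half (P i))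
    (fun i => hasDerivAt_mul_mul_one_add_sq_rpow (P i)), EuclideanSpace.real_norm_sq_eq lam,
    mul_sum]
  refine sum_le_sum fun i _ => mul_le_mul_of_nonneg_right ?_ (sq_nonneg _)
  have hξi : ξ i ^ 2 ≤ ‖ξ‖ ^ 2 := by
    simpa [sq_abs] using pow_le_pow_left₀ (norm_nonneg _) (PiLp.norm_apply_le ξ i) 2
  exact (mul_sub_one_mul_one_add_rpow_le_of_le (hP i₀).1.le (hmin ⟨i, rfl⟩) (hP i).2 hξi).trans
    (mul_sub_one_mul_one_add_sq_rpow_le (ξ i) (by linarith [(hP i).1]) (hP i).2)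
end

section
/- Let f(ξ) = (Σ_{k=1}^n (1 + ξ_k²)^{p_k})^{1/2} with 1 < p_i ≤ 2 for all i (so q = max_i p_i ≤ 2), and p = min_i p_i. Then for every ξ with |ξ| ≥ 1 and every λ ∈ ℝ^n, Σ_{i,j} f_{ξ_i ξ_j}(ξ) λ_i λ_j ≤ C |ξ|^{(p/q)(q-2)} |λ|² for a constant C depending only on n, p, q. -/
/-!
Write `S(ξ) = Σ (1 + ξ_i²)^{P_i}`, so `f = √S`. Concavity of the square root bounds the Hessian
of `f` by `D²S / (2√S)`, and `D²S` is diagonal with entries at most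
`2P_i(2P_i - 1)(1 + ξ_i²)^{P_i - 1} ≤ 2q(2q - 1) S^{1 - 1/q}`, because `(1 + ξ_i²)^{P_i} ≤ S`
and `S ≥ 1`. This gives the bound `q(2q - 1) S^{1/2 - 1/q} |λ|²`. For `q ≤ 2` the exponent is
nonpositive, and the largest coordinate of `ξ` gives `S ≥ (|ξ|²/n)^p`, which turns it into a
power of `|ξ|`.
-/

open Real Finset

theorem hasDerivAt_one_add_sq_rpow (r t : ℝ) :
    HasDerivAt (fun t => (1 + t ^ 2) ^ r) (2 * r * t * (1 + t ^ 2) ^ (r - 1)) t := by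
  refine (((hasDerivAt_pow 2 t).const_add 1).rpow_const (Or.inl (by positivity))).congr_deriv ?_
  ring

theorem hasDerivAt_mul_one_add_sq_rpow (r t : ℝ) :
    HasDerivAt (fun t => t * (1 + t ^ 2) ^ r)
      ((1 + t ^ 2) ^ r + 2 * r * t ^ 2 * (1 + t ^ 2) ^ (r - 1)) t := by
  refine ((hasDerivAt_id' t).fun_mul (hasDerivAt_one_add_sq_rpow r t)).congr_deriv ?_
  ring

theorem one_add_sq_rpow_add_le {s : ℝ} (hs : 0 ≤ s) (t : ℝ) :
    (1 + t ^ 2) ^ s + 2 * s * t ^ 2 * (1 + t ^ 2) ^ (s - 1)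
      ≤ (1 + 2 * s) * (1 + t ^ 2) ^ s := by
  have hb : 0 < 1 + t ^ 2 := by positivity
  have hsplit : (1 + t ^ 2) ^ s = (1 + t ^ 2) ^ (s - 1) * (1 + t ^ 2) := by
    rw [← rpow_add_one hb.ne']; ring_nf
  have := rpow_pos_of_pos hb (s - 1)
  rw [hsplit]
  nlinarith [mul_nonneg hs this.le]

theorem rpow_sub_one_le_rpow_one_sub_inv {a S r q : ℝ} (ha : 0 ≤ a) (hr : 1 ≤ r)
    (hrq : r ≤ q) (haS : a ^ r ≤ S) (hS : 1 ≤ S) : a ^ (r - 1) ≤ S ^ (1 - 1 / q) := by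
  have hr0 : r ≠ 0 := by positivity
  calc a ^ (r - 1) = (a ^ r) ^ (1 - 1 / r) := by
        rw [← rpow_mul ha]; congr 1; field_simp
    _ ≤ S ^ (1 - 1 / r) :=
      rpow_le_rpow (rpow_nonneg ha r) haS (sub_nonneg.2 (div_le_one_of_le₀ hr (by linarith)))
    _ ≤ S ^ (1 - 1 / q) :=
      rpow_le_rpow_of_exponent_le hS
        (sub_le_sub_left (one_div_le_one_div_of_le (by linarith) hrq) 1)

theorem rpow_rpow_sq_div_eq {a N p q : ℝ} (ha : 0 ≤ a) (hN : 0 < N) (hq : q ≠ 0) :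
    ((a ^ 2 / N) ^ p) ^ (1 / 2 - 1 / q) = N ^ (p * (1 / q - 1 / 2)) * a ^ (p / q * (q - 2)) := by
  rw [← rpow_mul (by positivity), div_rpow (by positivity) hN.le, ← rpow_natCast a 2,
    ← rpow_mul ha, div_eq_mul_inv, ← rpow_neg hN.le, mul_comm]
  congr 1
  · ring_nf
  · congr 1; field_simp; ring

theorem fderiv_fderiv_sqrt_apply_le {E : Type*} [NormedAddCommGroup E] [NormedSpace ℝ E]
    {g : E → ℝ} {g' : E → E →L[ℝ] ℝ} {L : E →L[ℝ] ℝ} {ξ v : E}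
    (hg : ∀ x, HasFDerivAt g (g' x) x) (hpos : ∀ x, 0 < g x)
    (hg' : HasFDerivAt (fun x => g' x v) L ξ) :
    fderiv ℝ (fun x => fderiv ℝ (fun y => √(g y)) x v) ξ v ≤ L v / (2 * √(g ξ)) := by
  have hfun : (fun x => fderiv ℝ (fun y => √(g y)) x v) =
      ((fun t => (2 * √t)⁻¹) ∘ g) * fun x => g' x v := by
    funext x
    rw [((hg x).sqrt (hpos x).ne').fderiv]
    simp
  have hs : 0 < 2 * √(g ξ) := by have := Real.sqrt_pos.2 (hpos ξ); positivity
  have hinv := (((hasDerivAt_sqrt (hpos ξ).ne').const_mul 2).fun_inv hs.ne').comp_hasFDerivAt ξ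
    (hg ξ)
  rw [hfun, (hinv.mul hg').fderiv]
  -- the cross term is `r * (g' ξ v)²` with `r ≤ 0`, by concavity of the square root
  set r := -(2 * (1 / (2 * √(g ξ)))) / (2 * √(g ξ)) ^ 2
  have hr : r ≤ 0 :=
    div_nonpos_of_nonpos_of_nonneg (by simp only [one_div, neg_nonpos]; positivity) (sq_nonneg _)
  have : (2 * √(g ξ))⁻¹ * L v + g' ξ v * (r * g' ξ v) ≤ L v / (2 * √(g ξ)) := by
    rw [div_eq_inv_mul]; nlinarith [mul_nonpos_of_nonpos_of_nonneg hr (mul_self_nonneg (g' ξ v))]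
  simpa using this

theorem hasFDerivAt_sum_apply {ι : Type*} [Fintype ι] {φ : ι → ℝ → ℝ} {φ' : ι → ℝ}
    {x : EuclideanSpace ℝ ι} (h : ∀ i, HasDerivAt (φ i) (φ' i) (x i)) :
    HasFDerivAt (fun y : EuclideanSpace ℝ ι => ∑ i, φ i (y i))
      (∑ i, φ' i • EuclideanSpace.proj (𝕜 := ℝ) i) x :=
  HasFDerivAt.fun_sum fun i _ =>
    (h i).comp_hasFDerivAt x (EuclideanSpace.proj (𝕜 := ℝ) i).hasFDerivAt

theorem exists_sq_norm_le_card_mul_sq {ι : Type*} [Fintype ι] [Nonempty ι]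
    (x : EuclideanSpace ℝ ι) : ∃ i, ‖x‖ ^ 2 ≤ Fintype.card ι * x i ^ 2 := by
  obtain ⟨i, -, hi⟩ := exists_max_image univ (fun i => x i ^ 2) univ_nonempty
  refine ⟨i, ?_⟩
  rw [EuclideanSpace.real_norm_sq_eq]
  simpa using sum_le_sum fun j hj => hi j hj

section SumOneAddSqRpow

variable {ι : Type*} [Fintype ι] [Nonempty ι] {P : ι → ℝ}

theorem rpow_le_sum_one_add_sq_rpow {p : ℝ} (hp : 0 ≤ p) (hpP : ∀ i, p ≤ P i)
    (ξ : EuclideanSpace ℝ ι) :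
    (‖ξ‖ ^ 2 / Fintype.card ι) ^ p ≤ ∑ i, (1 + ξ i ^ 2) ^ P i := by
  obtain ⟨i, hi⟩ := exists_sq_norm_le_card_mul_sq ξ
  calc (‖ξ‖ ^ 2 / Fintype.card ι) ^ p ≤ (1 + ξ i ^ 2) ^ p := by
        gcongr
        rw [div_le_iff₀' (by exact_mod_cast Fintype.card_pos)]
        nlinarith [sq_nonneg (ξ i)]
    _ ≤ (1 + ξ i ^ 2) ^ P i := rpow_le_rpow_of_exponent_le (by nlinarith) (hpP i)
    _ ≤ ∑ i, (1 + ξ i ^ 2) ^ P i :=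
      single_le_sum (f := fun i => (1 + ξ i ^ 2) ^ P i) (fun j _ => by positivity) (mem_univ i)

theorem fderiv_fderiv_sqrt_sum_one_add_sq_rpow_apply_le (hP : ∀ i, 1 ≤ P i)
    (ξ v : EuclideanSpace ℝ ι) :
    fderiv ℝ (fun x => fderiv ℝ (fun y => √(∑ i, (1 + y i ^ 2) ^ P i)) x v) ξ v
      ≤ (∑ i, 2 * P i * (2 * P i - 1) * (1 + ξ i ^ 2) ^ (P i - 1) * v i ^ 2)
          / (2 * √(∑ i, (1 + ξ i ^ 2) ^ P i)) := by
  set g' : EuclideanSpace ℝ ι → EuclideanSpace ℝ ι →L[ℝ] ℝ := fun x =>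
    ∑ i, (2 * P i * x i * (1 + x i ^ 2) ^ (P i - 1)) • EuclideanSpace.proj (𝕜 := ℝ) i
  have hg'v : (fun x => g' x v) =
      fun x => ∑ i, 2 * P i * v i * (x i * (1 + x i ^ 2) ^ (P i - 1)) := by
    funext x
    simp only [g', _root_.sum_apply, smul_apply, smul_eq_mul]
    exact sum_congr rfl fun i _ => by simp; ring
  have hg'' := hasFDerivAt_sum_apply (x := ξ) fun i =>
    (hasDerivAt_mul_one_add_sq_rpow (P i - 1) (ξ i)).const_mul (2 * P i * v i)
  rw [← hg'v] at hg''
  have hpos : ∀ x : EuclideanSpace ℝ ι, 0 < ∑ i, (1 + x i ^ 2) ^ P i := fun x =>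
    sum_pos (fun i _ => by positivity) univ_nonempty
  refine (fderiv_fderiv_sqrt_apply_le (fun x => hasFDerivAt_sum_apply fun i =>
    hasDerivAt_one_add_sq_rpow (P i) (x i)) hpos hg'').trans ?_
  gcongr
  simp only [_root_.sum_apply, smul_apply, smul_eq_mul, PiLp.proj_apply]
  refine sum_le_sum fun i _ => ?_
  have h := one_add_sq_rpow_add_le (s := P i - 1) (by linarith [hP i]) (ξ i)
  have hPi : 0 ≤ 2 * P i * v i ^ 2 := by nlinarith [hP i]
  nlinarith [mul_le_mul_of_nonneg_left h hPi]

theorem fderiv_fderiv_sqrt_sum_one_add_sq_rpow_apply_le_rpow {q : ℝ} (hP : ∀ i, 1 ≤ P i)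
    (hPq : ∀ i, P i ≤ q) (ξ v : EuclideanSpace ℝ ι) :
    fderiv ℝ (fun x => fderiv ℝ (fun y => √(∑ i, (1 + y i ^ 2) ^ P i)) x v) ξ v
      ≤ q * (2 * q - 1) * (∑ i, (1 + ξ i ^ 2) ^ P i) ^ (1 / 2 - 1 / q) * ‖v‖ ^ 2 := by
  set S := ∑ i, (1 + ξ i ^ 2) ^ P i
  have hterm : ∀ i, (1 + ξ i ^ 2) ^ P i ≤ S := fun i =>
    single_le_sum (f := fun i => (1 + ξ i ^ 2) ^ P i) (fun j _ => by positivity) (mem_univ i)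
  have hS : 1 ≤ S := by
    obtain ⟨i⟩ := ‹Nonempty ι›
    exact (one_le_rpow (by nlinarith) (by linarith [hP i])).trans (hterm i)
  have hentry : ∀ i, 2 * P i * (2 * P i - 1) * (1 + ξ i ^ 2) ^ (P i - 1) * v i ^ 2
      ≤ 2 * q * (2 * q - 1) * S ^ (1 - 1 / q) * v i ^ 2 := fun i => by
    have hpow := rpow_sub_one_le_rpow_one_sub_inv (by positivity) (hP i) (hPq i) (hterm i) hS
    have hcoef : 2 * P i * (2 * P i - 1) ≤ 2 * q * (2 * q - 1) := by nlinarith [hP i, hPq i]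
    have hcoef0 : 0 ≤ 2 * P i * (2 * P i - 1) := by nlinarith [hP i]
    have := hcoef0.trans hcoef
    gcongr
  calc _ ≤ _ := fderiv_fderiv_sqrt_sum_one_add_sq_rpow_apply_le hP ξ v
    _ ≤ (2 * q * (2 * q - 1) * S ^ (1 - 1 / q) * ‖v‖ ^ 2) / (2 * √S) := by
      rw [EuclideanSpace.real_norm_sq_eq, mul_sum]
      exact div_le_div_of_nonneg_right (sum_le_sum fun i _ => hentry i) (by positivity)
    _ = q * (2 * q - 1) * S ^ (1 / 2 - 1 / q) * ‖v‖ ^ 2 := by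
      rw [sqrt_eq_rpow, show (1:ℝ) - 1 / q = (1 / 2 - 1 / q) + 1 / 2 by ring,
        rpow_add (by linarith)]
      have : 0 < S ^ (1 / 2 : ℝ) := by positivity
      field_simp

end SumOneAddSqRpow

theorem sqrt_sum_hessian_upper_bound {n : ℕ}
    (P : Fin n → ℝ) (hP : ∀ i, 1 < P i ∧ P i ≤ 2)
    (p q : ℝ) (hp : IsLeast (Set.range P) p) (hq : IsGreatest (Set.range P) q)
    (f : EuclideanSpace ℝ (Fin n) → ℝ)
    (hf : f = fun ξ => Real.sqrt (∑ i, (1 + (ξ i) ^ 2) ^ (P i))) :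
    ∃ C : ℝ, 0 < C ∧ ∀ ξ lam : EuclideanSpace ℝ (Fin n), 1 ≤ ‖ξ‖ →
      fderiv ℝ (fun x => fderiv ℝ f x lam) ξ lam
        ≤ C * ‖ξ‖ ^ ((p / q) * (q - 2)) * ‖lam‖ ^ 2 := by
  subst hf
  obtain ⟨⟨ip, hip⟩, hpP⟩ := hp
  obtain ⟨⟨iq, hiq⟩, hPq⟩ := hq
  have : Nonempty (Fin n) := ⟨ip⟩
  have hn : (0 : ℝ) < n := by exact_mod_cast ip.pos
  have hp0 : 0 < p := hip ▸ by linarith [hP ip]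
  have hq1 : 1 < q := hiq ▸ (hP iq).1
  have he : 1 / 2 - 1 / q ≤ 0 :=
    sub_nonpos.2 (one_div_le_one_div_of_le (by linarith) (hiq ▸ (hP iq).2))
  have hC : 0 < q * (2 * q - 1) := by nlinarith
  set C := q * (2 * q - 1) * (n : ℝ) ^ (p * (1 / q - 1 / 2))
  refine ⟨C, by positivity, fun ξ lam hξ => ?_⟩
  have hξ0 : 0 < ‖ξ‖ := one_pos.trans_le hξ
  have hS := rpow_le_rpow_of_nonpos (by positivity)
    (rpow_le_sum_one_add_sq_rpow hp0.le (fun i => hpP ⟨i, rfl⟩) ξ) he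
  rw [Fintype.card_fin, rpow_rpow_sq_div_eq (norm_nonneg ξ) hn (by linarith)] at hS
  calc _ ≤ _ := fderiv_fderiv_sqrt_sum_one_add_sq_rpow_apply_le_rpow
          (fun i => (hP i).1.le) (fun i => hPq ⟨i, rfl⟩) ξ lam
    _ ≤ q * (2 * q - 1) * ((n : ℝ) ^ (p * (1 / q - 1 / 2)) * ‖ξ‖ ^ (p / q * (q - 2)))
          * ‖lam‖ ^ 2 := by gcongr
    _ = _ := by ring
end

section
/- Let g₁, g₂ : [1,+∞) → (0,+∞) be continuous with g₂ decreasing, t ↦ t·g₂(t) increasing, and (g₂(t))^{2/2*} ≤ C₁ t^{2β} g₁(t) for all t ≥ 1, where 2* = 2n/(n-2) (n > 2) and 1/n < β < 2/n. Then for every γ ≥ 0 there is a constant C₃ = C₃(C₁, g₂(1)) > 0, independent of γ, such that for all t ≥ 0: C₃[1 + g₂(1+t)^{1/2*} (1+t)^{γ/2+1-β}/(γ/2+1-β)²] ≤ 1 + ∫₀^t (1+s)^{(γ-2)/2} s √(g₁(1+s)) ds. -/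
/-!
For `s ≤ t` the weight `g₂(1+t)^{1/2*}` is at most `g₂(1+s)^{1/2*} ≤ √C₁ (1+s)^β √g₁(1+s)`, which
reduces the claim to the elementary bound `(1+t)^α ≤ e + (α² + α) ∫₀^t (1+s)^{α-2} s ds` with
`α = γ/2 + 1 - β ≥ 1/3`. That bound holds because `(1+t)^α ≤ e^{αt} ≤ e` for `t ≤ 1/α`, while on
`[1/α, t]` the derivative `α (1+s)^{α-1}` of `(1+s)^α` is at most `(α² + α) (1+s)^{α-2} s`.
-/

open Real Set intervalIntegral

theorem one_add_rpow_le_exp_one {α t : ℝ} (hα : 0 ≤ α) (ht : 0 ≤ t) (hαt : α * t ≤ 1) :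
    (1 + t) ^ α ≤ exp 1 :=
  calc (1 + t) ^ α ≤ exp t ^ α := by gcongr; linarith [add_one_le_exp t]
    _ = exp (t * α) := (exp_mul t α).symm
    _ ≤ exp 1 := by gcongr; linarith

theorem intervalIntegrable_one_add_rpow (p : ℝ) {a b : ℝ} (ha : 0 ≤ a) (hb : 0 ≤ b) :
    IntervalIntegrable (fun s : ℝ => (1 + s) ^ p) MeasureTheory.volume a b := by
  refine (ContinuousOn.rpow_const (by fun_prop) fun s hs => Or.inl ?_).intervalIntegrable
  have : 0 ≤ s := (le_min ha hb).trans hs.1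
  positivity

theorem intervalIntegrable_one_add_rpow_mul (p : ℝ) {a b : ℝ} (ha : 0 ≤ a) (hb : 0 ≤ b) :
    IntervalIntegrable (fun s : ℝ => (1 + s) ^ p * s) MeasureTheory.volume a b :=
  (intervalIntegrable_one_add_rpow p ha hb).mul_continuousOn continuousOn_id

theorem integral_one_add_rpow_mul_nonneg (p : ℝ) {t : ℝ} (ht : 0 ≤ t) :
    0 ≤ ∫ s in (0 : ℝ)..t, (1 + s) ^ p * s :=
  integral_nonneg ht fun s hs => mul_nonneg (rpow_nonneg (by linarith [hs.1]) p) hs.1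

theorem one_add_rpow_le_exp_one_add_integral {α t : ℝ} (hα : 0 < α) (ht : 0 ≤ t) :
    (1 + t) ^ α ≤ exp 1 + (α ^ 2 + α) * ∫ s in (0 : ℝ)..t, (1 + s) ^ (α - 2) * s := by
  have hI := integral_one_add_rpow_mul_nonneg (α - 2) ht
  rcases le_or_gt t α⁻¹ with htα | htα
  · have hαt : α * t ≤ 1 := by simpa [hα.ne'] using mul_le_mul_of_nonneg_left htα hα.le
    nlinarith [one_add_rpow_le_exp_one hα.le ht hαt]
  have hαinv : 0 < α⁻¹ := inv_pos.2 hα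
  have hftc : ∫ s in α⁻¹..t, α * (1 + s) ^ (α - 1) = (1 + t) ^ α - (1 + α⁻¹) ^ α := by
    apply integral_eq_sub_of_hasDerivAt
    · intro s hs
      have : 0 < 1 + s := by
        have := (le_min hαinv.le ht).trans hs.1
        positivity
      simpa using ((hasDerivAt_id s).const_add 1).rpow_const (p := α) (Or.inl this.ne')
    · exact (intervalIntegrable_one_add_rpow _ hαinv.le ht).const_mul α
  have hderiv : ∀ s ∈ Icc α⁻¹ t,
      α * (1 + s) ^ (α - 1) ≤ (α ^ 2 + α) * ((1 + s) ^ (α - 2) * s) := by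
    intro s hs
    have h1s : 0 < 1 + s := by linarith [hs.1]
    have hαs : 1 ≤ α * s := by simpa [hα.ne'] using mul_le_mul_of_nonneg_left hs.1 hα.le
    rw [show α - 1 = α - 2 + 1 by ring, rpow_add_one h1s.ne']
    nlinarith [mul_nonneg (rpow_pos_of_pos h1s (α - 2)).le (mul_nonneg hα.le (sub_nonneg.2 hαs))]
  calc (1 + t) ^ α = (1 + α⁻¹) ^ α + ∫ s in α⁻¹..t, α * (1 + s) ^ (α - 1) := by
        rw [hftc]; ring
    _ ≤ exp 1 + ∫ s in α⁻¹..t, (α ^ 2 + α) * ((1 + s) ^ (α - 2) * s) := by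
        gcongr ?_ + ?_
        · exact one_add_rpow_le_exp_one hα.le hαinv.le (mul_inv_cancel₀ hα.ne').le
        · refine integral_mono_on htα.le ?_ ?_ hderiv
          · exact (intervalIntegrable_one_add_rpow _ hαinv.le ht).const_mul α
          · exact (intervalIntegrable_one_add_rpow_mul _ hαinv.le ht).const_mul _
    _ ≤ exp 1 + (α ^ 2 + α) * ∫ s in (0 : ℝ)..t, (1 + s) ^ (α - 2) * s := by
        rw [integral_const_mul, ← integral_add_adjacent_intervals
          (intervalIntegrable_one_add_rpow_mul _ le_rfl hαinv.le)
          (intervalIntegrable_one_add_rpow_mul _ hαinv.le ht)]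
        have := integral_one_add_rpow_mul_nonneg (α - 2) hαinv.le
        gcongr
        linarith

theorem one_add_rpow_div_sq_le {α₀ α t : ℝ} (hα₀ : 0 < α₀) (hα : α₀ ≤ α) (ht : 0 ≤ t) :
    (1 + t) ^ α / α ^ 2 ≤
      exp 1 / α₀ ^ 2 + (1 + α₀⁻¹) * ∫ s in (0 : ℝ)..t, (1 + s) ^ (α - 2) * s := by
  have hα' : 0 < α := hα₀.trans_le hα
  have hI := integral_one_add_rpow_mul_nonneg (α - 2) ht
  calc (1 + t) ^ α / α ^ 2
      ≤ (exp 1 + (α ^ 2 + α) * ∫ s in (0 : ℝ)..t, (1 + s) ^ (α - 2) * s) / α ^ 2 := by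
        gcongr; exact one_add_rpow_le_exp_one_add_integral hα' ht
    _ = exp 1 / α ^ 2 + (1 + α⁻¹) * ∫ s in (0 : ℝ)..t, (1 + s) ^ (α - 2) * s := by
        field_simp
    _ ≤ _ := by gcongr

theorem rpow_le_sqrt_mul_rpow_mul_sqrt {x y C u q β : ℝ} (hx : 0 ≤ x) (hC : 0 ≤ C) (hu : 0 ≤ u)
    (h : x ^ (2 * q) ≤ C * u ^ (2 * β) * y) : x ^ q ≤ √C * u ^ β * √y :=
  calc x ^ q = √(x ^ (2 * q)) := by rw [sqrt_eq_rpow, ← rpow_mul hx]; congr 1; ring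
    _ ≤ √(C * u ^ (2 * β) * y) := sqrt_le_sqrt h
    _ = √C * u ^ β * √y := by
        rw [sqrt_mul (by positivity), sqrt_mul hC, sqrt_eq_rpow (u ^ _), ← rpow_mul hu]
        congr 3; ring

theorem rpow_mul_integral_le_sqrt_mul_integral {g₁ g₂ : ℝ → ℝ} {C q β p t : ℝ} (hC : 0 ≤ C)
    (hq : 0 ≤ q) (ht : 0 ≤ t) (hg₁ : ContinuousOn g₁ (Ici 1)) (hg₂ : ∀ u, 1 ≤ u → 0 ≤ g₂ u)
    (hg₂dec : AntitoneOn g₂ (Ici 1))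
    (hcomp : ∀ u, 1 ≤ u → g₂ u ^ (2 * q) ≤ C * u ^ (2 * β) * g₁ u) :
    g₂ (1 + t) ^ q * ∫ s in (0 : ℝ)..t, (1 + s) ^ (p - β) * s ≤
      √C * ∫ s in (0 : ℝ)..t, (1 + s) ^ p * s * √(g₁ (1 + s)) := by
  rw [← integral_const_mul, ← integral_const_mul]
  refine integral_mono_on ht ((intervalIntegrable_one_add_rpow_mul _ le_rfl ht).const_mul _)
    (ContinuousOn.intervalIntegrable ?_) fun s hs => ?_
  · have hmaps : MapsTo (fun s : ℝ => 1 + s) (uIcc 0 t) (Ici 1) := fun s hs => by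
      rw [uIcc_of_le ht] at hs
      simp only [mem_Ici]; linarith [hs.1]
    refine ContinuousOn.const_smul (((ContinuousOn.rpow_const (by fun_prop)
      fun s hs => Or.inl ?_).mul continuousOn_id).mul (hg₁.comp (by fun_prop) hmaps).sqrt) √C
    have := hmaps hs
    simp only [mem_Ici] at this
    linarith
  · have h1s : 1 ≤ 1 + s := by linarith [hs.1]
    have h1t : 1 ≤ 1 + t := by linarith
    have hweight : g₂ (1 + t) ^ q ≤ √C * (1 + s) ^ β * √(g₁ (1 + s)) :=
      (rpow_le_rpow (hg₂ _ h1t) (hg₂dec h1s h1t (by linarith [hs.2])) hq).trans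
        (rpow_le_sqrt_mul_rpow_mul_sqrt (hg₂ _ h1s) hC (by linarith) (hcomp _ h1s))
    have hβ : 0 < (1 + s) ^ β := rpow_pos_of_pos (by linarith) β
    calc g₂ (1 + t) ^ q * ((1 + s) ^ (p - β) * s)
        ≤ √C * (1 + s) ^ β * √(g₁ (1 + s)) * ((1 + s) ^ (p - β) * s) := by
          have : 0 ≤ s := hs.1
          gcongr
      _ = √C * ((1 + s) ^ p * s * √(g₁ (1 + s))) := by
          rw [rpow_sub (by linarith)]; field_simp

theorem one_add_rpow_mul_rpow_div_sq_le {g₁ g₂ : ℝ → ℝ} {C q β α₀ γ t : ℝ} (hα₀ : 0 < α₀)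
    (hC : 0 ≤ C) (hq : 0 ≤ q) (hg₁ : ContinuousOn g₁ (Ici 1)) (hg₂ : ∀ u, 1 ≤ u → 0 ≤ g₂ u)
    (hg₂dec : AntitoneOn g₂ (Ici 1))
    (hcomp : ∀ u, 1 ≤ u → g₂ u ^ (2 * q) ≤ C * u ^ (2 * β) * g₁ u)
    (hα : α₀ ≤ γ / 2 + 1 - β) (ht : 0 ≤ t) :
    1 + g₂ (1 + t) ^ q * (1 + t) ^ (γ / 2 + 1 - β) / (γ / 2 + 1 - β) ^ 2 ≤
      (1 + g₂ 1 ^ q * (exp 1 / α₀ ^ 2) + (1 + α₀⁻¹) * √C) *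
        (1 + ∫ s in (0 : ℝ)..t, (1 + s) ^ ((γ - 2) / 2) * s * √(g₁ (1 + s))) := by
  set α := γ / 2 + 1 - β
  set F := ∫ s in (0 : ℝ)..t, (1 + s) ^ ((γ - 2) / 2) * s * √(g₁ (1 + s))
  have hF : 0 ≤ F := integral_nonneg ht fun s hs => by have := hs.1; positivity
  have h1t : 1 ≤ 1 + t := by linarith
  have hK : 0 ≤ g₂ (1 + t) ^ q := rpow_nonneg (hg₂ _ h1t) q
  have hKM : g₂ (1 + t) ^ q ≤ g₂ 1 ^ q :=
    rpow_le_rpow (hg₂ _ h1t) (hg₂dec (le_refl (1 : ℝ)) h1t (by linarith)) hq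
  have hKI := rpow_mul_integral_le_sqrt_mul_integral (p := (γ - 2) / 2) hC hq ht hg₁ hg₂ hg₂dec hcomp
  rw [show (γ - 2) / 2 - β = α - 2 by ring] at hKI
  have hM : 0 ≤ g₂ 1 ^ q := rpow_nonneg (hg₂ 1 le_rfl) q
  calc 1 + g₂ (1 + t) ^ q * (1 + t) ^ α / α ^ 2 = 1 + g₂ (1 + t) ^ q * ((1 + t) ^ α / α ^ 2) := by
        rw [mul_div_assoc]
    _ ≤ 1 + g₂ (1 + t) ^ q * (exp 1 / α₀ ^ 2 +
          (1 + α₀⁻¹) * ∫ s in (0 : ℝ)..t, (1 + s) ^ (α - 2) * s) := by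
        gcongr; exact one_add_rpow_div_sq_le hα₀ hα ht
    _ = 1 + g₂ (1 + t) ^ q * (exp 1 / α₀ ^ 2) +
          (1 + α₀⁻¹) * (g₂ (1 + t) ^ q * ∫ s in (0 : ℝ)..t, (1 + s) ^ (α - 2) * s) := by
        ring
    _ ≤ 1 + g₂ 1 ^ q * (exp 1 / α₀ ^ 2) + (1 + α₀⁻¹) * (√C * F) := by gcongr
    _ ≤ (1 + g₂ 1 ^ q * (exp 1 / α₀ ^ 2) + (1 + α₀⁻¹) * √C) * (1 + F) := by
        nlinarith [mul_nonneg (by positivity : 0 ≤ 1 + g₂ 1 ^ q * (exp 1 / α₀ ^ 2)) hF,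
          mul_nonneg (by positivity : 0 ≤ 1 + α₀⁻¹) (sqrt_nonneg C)]

theorem integral_lower_bound_lemma_general (n : ℕ) (hn : 2 < n)
    (g₁ g₂ : ℝ → ℝ) (C₁ β : ℝ) (hC₁ : 0 < C₁)
    (hg₁c : ContinuousOn g₁ (Set.Ici 1))
    (hg₂pos : ∀ t : ℝ, 1 ≤ t → 0 < g₂ t)
    (hg₂dec : AntitoneOn g₂ (Set.Ici 1))
    (hβ₂ : β < 2 / (n : ℝ))
    (hcomp : ∀ t : ℝ, 1 ≤ t →
      (g₂ t) ^ (2 / (2 * (n : ℝ) / ((n : ℝ) - 2))) ≤ C₁ * t ^ (2 * β) * g₁ t) :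
    ∃ C₃ : ℝ, 0 < C₃ ∧ ∀ γ : ℝ, 0 ≤ γ → ∀ t : ℝ, 0 ≤ t →
      C₃ * (1 + (g₂ (1 + t)) ^ (1 / (2 * (n : ℝ) / ((n : ℝ) - 2))) *
          (1 + t) ^ (γ / 2 + 1 - β) / (γ / 2 + 1 - β) ^ 2)
        ≤ 1 + ∫ s in (0:ℝ)..t, (1 + s) ^ ((γ - 2) / 2) * s * Real.sqrt (g₁ (1 + s)) := by
  set q := 1 / (2 * (n : ℝ) / ((n : ℝ) - 2))
  have hn3 : (3 : ℝ) ≤ n := by exact_mod_cast hn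
  have hq : 0 ≤ q := by
    have : (0 : ℝ) < n - 2 := by linarith
    positivity
  have hβ : β < 2 / 3 := hβ₂.trans_le (by gcongr)
  have hcomp' : ∀ u, 1 ≤ u → g₂ u ^ (2 * q) ≤ C₁ * u ^ (2 * β) * g₁ u := by
    simpa only [q, mul_one_div] using hcomp
  have hg₂ : ∀ u, 1 ≤ u → 0 ≤ g₂ u := fun u hu => (hg₂pos u hu).le
  have hM : 0 ≤ g₂ 1 ^ q := rpow_nonneg (hg₂ 1 le_rfl) q
  refine ⟨(1 + g₂ 1 ^ q * (exp 1 / (1 / 3) ^ 2) + (1 + (1 / 3)⁻¹) * √C₁)⁻¹, by positivity,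
    fun γ hγ t ht => ?_⟩
  rw [inv_mul_le_iff₀ (by positivity)]
  exact one_add_rpow_mul_rpow_div_sq_le (by norm_num) hC₁.le hq hg₁c hg₂ hg₂dec hcomp'
    (by linarith) ht

theorem integral_lower_bound_lemma (n : ℕ) (hn : 2 < n)
    (g₁ g₂ : ℝ → ℝ) (C₁ β : ℝ) (hC₁ : 0 < C₁)
    (hg₁c : ContinuousOn g₁ (Set.Ici 1)) (hg₂c : ContinuousOn g₂ (Set.Ici 1))
    (hg₁pos : ∀ t : ℝ, 1 ≤ t → 0 < g₁ t) (hg₂pos : ∀ t : ℝ, 1 ≤ t → 0 < g₂ t)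
    (hg₂dec : AntitoneOn g₂ (Set.Ici 1))
    (hg₂mono : MonotoneOn (fun t => t * g₂ t) (Set.Ici 1))
    (hβ₁ : 1 / (n : ℝ) < β) (hβ₂ : β < 2 / (n : ℝ))
    (hcomp : ∀ t : ℝ, 1 ≤ t →
      (g₂ t) ^ (2 / (2 * (n : ℝ) / ((n : ℝ) - 2))) ≤ C₁ * t ^ (2 * β) * g₁ t) :
    ∃ C₃ : ℝ, 0 < C₃ ∧ ∀ γ : ℝ, 0 ≤ γ → ∀ t : ℝ, 0 ≤ t →
      C₃ * (1 + (g₂ (1 + t)) ^ (1 / (2 * (n : ℝ) / ((n : ℝ) - 2))) *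
          (1 + t) ^ (γ / 2 + 1 - β) / (γ / 2 + 1 - β) ^ 2)
        ≤ 1 + ∫ s in (0:ℝ)..t, (1 + s) ^ ((γ - 2) / 2) * s * Real.sqrt (g₁ (1 + s)) :=
  integral_lower_bound_lemma_general n hn g₁ g₂ C₁ β hC₁ hg₁c hg₂pos hg₂dec hβ₂ hcomp
end

section
/- Let Φ(t) = (1+t)^{γ-2} t² for γ ≥ 0 and define G(t) = 1 + ∫₀^t √(Φ(s) g₁(1+s)) ds where g₁ ≤ g₂ pointwise (after multiplying by (1+s)) and t ↦ t g₂(t) is increasing on [1,∞). Then for all t ≥ 0, G(t) ≤ 1 + 2√(Φ(t)(1+t) g₂(1+t)) √(1+t), and hence (G(t))² ≤ 8[1 + Φ(t)(1+t)² g₂(1+t)]. -/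
open Set MeasureTheory

/- The integrand is at most √(Φ(t)(1+t)g₂(1+t)) · (1+s)^{-1/2} on [0, t], because
Φ(s) · (1+s)g₁(1+s) ≤ Φ(s) · (1+s)g₂(1+s) ≤ Φ(t) · (1+t)g₂(1+t) by the monotonicity of Φ and of
u ↦ u g₂(u); integrating (1+s)^{-1/2} gives the factor 2√(1+t). The bound on G(t)² follows from
(1 + a)² ≤ 2(1 + a²). -/

theorem intervalIntegral.integral_mono_on_of_nonneg {μ : Measure ℝ} {f g : ℝ → ℝ}
    {a b : ℝ} (hab : a ≤ b) (hg : IntervalIntegrable g μ a b) (hf : ∀ x ∈ Icc a b, 0 ≤ f x)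
    (h : ∀ x ∈ Icc a b, f x ≤ g x) : ∫ x in a..b, f x ∂μ ≤ ∫ x in a..b, g x ∂μ := by
  rw [intervalIntegral.integral_of_le hab, intervalIntegral.integral_of_le hab]
  refine integral_mono_of_nonneg ?_ hg.1 ?_ <;>
    filter_upwards [ae_restrict_mem measurableSet_Ioc] with x hx
  exacts [hf x (Ioc_subset_Icc_self hx), h x (Ioc_subset_Icc_self hx)]

theorem monotoneOn_one_add_rpow_sub_two_mul_sq {γ : ℝ} (hγ : 0 ≤ γ) :
    MonotoneOn (fun s : ℝ => (1 + s) ^ (γ - 2) * s ^ 2) (Ici 0) := by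
  have hform : ∀ u : ℝ, 0 < 1 + u → (1 + u) ^ (γ - 2) * u ^ 2 = (1 + u) ^ γ * (u / (1 + u)) ^ 2 := by
    intro u hu
    rw [Real.rpow_sub hu, Real.rpow_two, div_pow]
    field_simp
  intro s (hs : 0 ≤ s) t (ht : 0 ≤ t) hst
  have hs₁ : 0 < 1 + s := by linarith
  have ht₁ : 0 < 1 + t := by linarith
  simp only [hform s hs₁, hform t ht₁]
  have hratio : s / (1 + s) ≤ t / (1 + t) := by
    rw [div_le_div_iff₀ hs₁ ht₁]
    nlinarith
  gcongr

theorem integral_one_add_rpow_neg_half {t : ℝ} (ht : -1 < t) :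
    ∫ s in (0 : ℝ)..t, (1 + s) ^ (-(1 / 2 : ℝ)) = 2 * √(1 + t) - 2 := by
  have hzero : (0 : ℝ) ∉ uIcc 1 (1 + t) := by
    rw [mem_uIcc]
    rintro (⟨h, -⟩ | ⟨h, -⟩) <;> linarith
  rw [intervalIntegral.integral_comp_add_left (fun u : ℝ => u ^ (-(1 / 2 : ℝ))),
    add_zero, integral_rpow (Or.inr ⟨by norm_num, hzero⟩), Real.one_rpow, Real.sqrt_eq_rpow]
  norm_num
  ring

theorem integral_sqrt_le_of_one_add_mul_le {F : ℝ → ℝ} {M t : ℝ} (ht : 0 ≤ t)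
    (hF : ∀ s ∈ Icc 0 t, (1 + s) * F s ≤ M) :
    ∫ s in (0 : ℝ)..t, √(F s) ≤ 2 * √M * √(1 + t) := by
  have hpointwise : ∀ s ∈ Icc 0 t, √(F s) ≤ √M * (1 + s) ^ (-(1 / 2 : ℝ)) := by
    intro s hs
    have hs₁ : 0 < 1 + s := by linarith [hs.1]
    calc √(F s) ≤ √(M / (1 + s)) :=
          Real.sqrt_le_sqrt ((le_div_iff₀ hs₁).2 (by linarith [hF s hs]))
      _ = √M * (1 + s) ^ (-(1 / 2 : ℝ)) := by
          rw [Real.sqrt_div' _ hs₁.le, Real.rpow_neg hs₁.le, ← Real.sqrt_eq_rpow, div_eq_mul_inv]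
  have hint : IntervalIntegrable (fun s : ℝ => √M * (1 + s) ^ (-(1 / 2 : ℝ))) volume 0 t := by
    refine ContinuousOn.intervalIntegrable fun s hs => ContinuousAt.continuousWithinAt ?_
    have : 0 < 1 + s := by linarith [(uIcc_of_le ht ▸ hs).1]
    exact continuousAt_const.mul ((continuousAt_const.add continuousAt_id).rpow_const
      (Or.inl this.ne'))
  calc ∫ s in (0 : ℝ)..t, √(F s)
      ≤ ∫ s in (0 : ℝ)..t, √M * (1 + s) ^ (-(1 / 2 : ℝ)) :=
        intervalIntegral.integral_mono_on_of_nonneg ht hint (fun _ _ => Real.sqrt_nonneg _)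
          hpointwise
    _ = √M * (2 * √(1 + t) - 2) := by
        rw [intervalIntegral.integral_const_mul, integral_one_add_rpow_neg_half (by linarith)]
    _ ≤ 2 * √M * √(1 + t) := by nlinarith [Real.sqrt_nonneg M]

theorem G_upper_bound_general (γ : ℝ) (hγ : 0 ≤ γ) (g₁ g₂ : ℝ → ℝ)
    (hg₂pos : ∀ t : ℝ, 1 ≤ t → 0 < g₂ t)
    (hle : ∀ s : ℝ, 0 ≤ s → (1 + s) * g₁ (1 + s) ≤ (1 + s) * g₂ (1 + s))
    (hmono : MonotoneOn (fun t => t * g₂ t) (Set.Ici 1)) :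
    ∀ t : ℝ, 0 ≤ t →
      (1 + ∫ s in (0:ℝ)..t, Real.sqrt ((1 + s) ^ (γ - 2) * s ^ 2 * g₁ (1 + s)))
          ≤ 1 + 2 * Real.sqrt ((1 + t) ^ (γ - 2) * t ^ 2 * (1 + t) * g₂ (1 + t)) *
              Real.sqrt (1 + t) ∧
      (1 + ∫ s in (0:ℝ)..t, Real.sqrt ((1 + s) ^ (γ - 2) * s ^ 2 * g₁ (1 + s))) ^ 2
          ≤ 8 * (1 + (1 + t) ^ (γ - 2) * t ^ 2 * (1 + t) ^ 2 * g₂ (1 + t)) := by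
  intro t ht
  set M := (1 + t) ^ (γ - 2) * t ^ 2 * (1 + t) * g₂ (1 + t)
  have hM : 0 ≤ M := by have := hg₂pos (1 + t) (by linarith); positivity
  have hbound : ∀ s ∈ Icc 0 t, (1 + s) * ((1 + s) ^ (γ - 2) * s ^ 2 * g₁ (1 + s)) ≤ M := by
    rintro s ⟨hs, hst⟩
    have hg₂s := hg₂pos (1 + s) (by linarith)
    calc (1 + s) * ((1 + s) ^ (γ - 2) * s ^ 2 * g₁ (1 + s))
        = (1 + s) ^ (γ - 2) * s ^ 2 * ((1 + s) * g₁ (1 + s)) := by ring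
      _ ≤ (1 + s) ^ (γ - 2) * s ^ 2 * ((1 + s) * g₂ (1 + s)) := 
          mul_le_mul_of_nonneg_left (hle s hs) (by positivity)
      _ ≤ (1 + t) ^ (γ - 2) * t ^ 2 * ((1 + t) * g₂ (1 + t)) := by
          gcongr ?_ * ?_
          · exact monotoneOn_one_add_rpow_sub_two_mul_sq hγ (mem_Ici.2 hs) (mem_Ici.2 ht) hst
          · exact hmono (by simp [hs]) (by simp [ht]) (by linarith)
      _ = M := by ring
  set I := ∫ s in (0:ℝ)..t, √((1 + s) ^ (γ - 2) * s ^ 2 * g₁ (1 + s))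
  have hI : I ≤ 2 * √M * √(1 + t) := integral_sqrt_le_of_one_add_mul_le ht hbound
  have hI₀ : 0 ≤ I := intervalIntegral.integral_nonneg ht fun _ _ => Real.sqrt_nonneg _
  refine ⟨by linarith, ?_⟩
  have hsq : (2 * √M * √(1 + t)) ^ 2 = 4 * (M * (1 + t)) := by
    rw [mul_pow, mul_pow, Real.sq_sqrt hM, Real.sq_sqrt (by linarith)]
    ring
  calc (1 + I) ^ 2 ≤ (1 + 2 * √M * √(1 + t)) ^ 2 := by gcongr
    _ ≤ 2 * (1 + (2 * √M * √(1 + t)) ^ 2) := by nlinarith [sq_nonneg (1 - 2 * √M * √(1 + t))]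
    _ ≤ 8 * (1 + (1 + t) ^ (γ - 2) * t ^ 2 * (1 + t) ^ 2 * g₂ (1 + t)) := by
        rw [hsq]
        nlinarith

theorem G_upper_bound (γ : ℝ) (hγ : 0 ≤ γ) (g₁ g₂ : ℝ → ℝ)
    (hg₁pos : ∀ t : ℝ, 1 ≤ t → 0 < g₁ t) (hg₂pos : ∀ t : ℝ, 1 ≤ t → 0 < g₂ t)
    (hg₁c : ContinuousOn g₁ (Set.Ici 1))
    (hle : ∀ s : ℝ, 0 ≤ s → (1 + s) * g₁ (1 + s) ≤ (1 + s) * g₂ (1 + s))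
    (hmono : MonotoneOn (fun t => t * g₂ t) (Set.Ici 1)) :
    ∀ t : ℝ, 0 ≤ t →
      (1 + ∫ s in (0:ℝ)..t, Real.sqrt ((1 + s) ^ (γ - 2) * s ^ 2 * g₁ (1 + s)))
          ≤ 1 + 2 * Real.sqrt ((1 + t) ^ (γ - 2) * t ^ 2 * (1 + t) * g₂ (1 + t)) *
              Real.sqrt (1 + t) ∧
      (1 + ∫ s in (0:ℝ)..t, Real.sqrt ((1 + s) ^ (γ - 2) * s ^ 2 * g₁ (1 + s))) ^ 2
          ≤ 8 * (1 + (1 + t) ^ (γ - 2) * t ^ 2 * (1 + t) ^ 2 * g₂ (1 + t)) :=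
  G_upper_bound_general γ hγ g₁ g₂ hg₂pos hle hmono
end
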